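/- Let b = (b₁,…,b_N) ∈ (K^×)^N satisfy: whenever b_i ≠ b_j, the ratio b_i/b_j is not an integer power of q. Let W_J = {w ∈ S_N : b_{w(i)} = b_i for all i} be the stabilizer of b in S_N, and let Γ_J ⊆ D be the subalgebra generated by Y₁^{±1},…,Y_N^{±1} and the elements s_w for w ∈ W_J. For a K[W_J]-module S, let b ⊠ S denote the Γ_J-module with underlying space S on which each s_w (w ∈ W_J) acts by w and each Y_i acts by the scalar b_i (this is well defined since W_J stabilizes b). If S is a simple K[W_J]-module, then the induced module D ⊗_{Γ_J} (b ⊠ S) is a simple left D-module. -/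

import Mathlib

/-!
Statement 14: Let `K` be a field of characteristic zero, `q ∈ K^×` not a root
of unity, and `D = D_q(H) # S_N` the smash product of the quantum torus with
the symmetric group.  Let `b ∈ (K^×)^N` be such that whenever `b_i ≠ b_j` the
ratio `b_i/b_j` is not an integer power of `q`, let `W_J ⊆ S_N` be the
stabilizer of `b`, and let `Γ_J ⊆ D` be the subalgebra generated by `Y_i^{±1}`
and the `s_w` for `w ∈ W_J`.  For a `K[W_J]`-module `S`, let `b ⊠ S` be the
`Γ_J`-module with underlying space `S` on which `s_w` acts by `w` and `Y_i` by
the scalar `b_i`.  If `S` is a simple `K[W_J]`-module, then `D ⊗_{Γ_J} (b ⊠ S)`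
is a simple left `D`-module.

The relative tensor product `D ⊗_{Γ_J} (b ⊠ S)` is realized as the quotient of
`D ⊗_K S` by the `D`-submodule spanned by the elements `d·γ ⊗ s − d ⊗ γ·s`
for `γ` ranging over the generators `Y_i`, `Y_i^{-1}`, `s_w` (`w ∈ W_J`) of
`Γ_J`.
-/

noncomputable section

/-- Generators of the smash product `D = D_q(H) # S_N`. -/
inductive SGen (N : ℕ) : Type
  | X : Fin N → SGen N
  | Xinv : Fin N → SGen N
  | Y : Fin N → SGen N
  | Yinv : Fin N → SGen N
  | S : Equiv.Perm (Fin N) → SGen N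

/-- The generator embedding into the free algebra. -/
def sg (K : Type) [Field K] {N : ℕ} (g : SGen N) : FreeAlgebra K (SGen N) :=
  FreeAlgebra.ι K g

/-- The defining relations of the smash product `D_q(H) # S_N`. -/
inductive SRel (K : Type) [Field K] (N : ℕ) (q : Kˣ) :
    FreeAlgebra K (SGen N) → FreeAlgebra K (SGen N) → Prop
  | XX (i j : Fin N) :
      SRel K N q (sg K (.X i) * sg K (.X j)) (sg K (.X j) * sg K (.X i))
  | XXinv (i : Fin N) : SRel K N q (sg K (.X i) * sg K (.Xinv i)) 1
  | XinvX (i : Fin N) : SRel K N q (sg K (.Xinv i) * sg K (.X i)) 1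
  | YY (i j : Fin N) :
      SRel K N q (sg K (.Y i) * sg K (.Y j)) (sg K (.Y j) * sg K (.Y i))
  | YYinv (i : Fin N) : SRel K N q (sg K (.Y i) * sg K (.Yinv i)) 1
  | YinvY (i : Fin N) : SRel K N q (sg K (.Yinv i) * sg K (.Y i)) 1
  | YXne (i j : Fin N) (h : i ≠ j) :
      SRel K N q (sg K (.Y i) * sg K (.X j)) (sg K (.X j) * sg K (.Y i))
  | YXeq (i : Fin N) :
      SRel K N q (sg K (.Y i) * sg K (.X i)) ((q : K) • (sg K (.X i) * sg K (.Y i)))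
  | Smul (w w' : Equiv.Perm (Fin N)) :
      SRel K N q (sg K (.S w) * sg K (.S w')) (sg K (.S (w * w')))
  | Sone : SRel K N q (sg K (.S 1)) 1
  | SX (w : Equiv.Perm (Fin N)) (i : Fin N) :
      SRel K N q (sg K (.S w) * sg K (.X i)) (sg K (.X (w i)) * sg K (.S w))
  | SY (w : Equiv.Perm (Fin N)) (i : Fin N) :
      SRel K N q (sg K (.S w) * sg K (.Y i)) (sg K (.Y (w i)) * sg K (.S w))

/-- The smash product `D = D_q(H) # S_N`, presented by generators and relations. -/
abbrev SmashD (K : Type) [Field K] (N : ℕ) (q : Kˣ) := RingQuot (SRel K N q)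

/-- The element `Y_i` of `D`. -/
def Ye (K : Type) [Field K] {N : ℕ} (q : Kˣ) (i : Fin N) : SmashD K N q :=
  RingQuot.mkAlgHom K (SRel K N q) (sg K (.Y i))

/-- The element `Y_i^{-1}` of `D`. -/
def YeInv (K : Type) [Field K] {N : ℕ} (q : Kˣ) (i : Fin N) : SmashD K N q :=
  RingQuot.mkAlgHom K (SRel K N q) (sg K (.Yinv i))

/-- The element `s_w` of `D`. -/
def Se (K : Type) [Field K] {N : ℕ} (q : Kˣ) (w : Equiv.Perm (Fin N)) : SmashD K N q :=
  RingQuot.mkAlgHom K (SRel K N q) (sg K (.S w))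

/-- The stabilizer `W_J = {w ∈ S_N : b_{w(i)} = b_i for all i}` of `b` in `S_N`. -/
def permStab (K : Type) [Field K] (N : ℕ) (b : Fin N → Kˣ) :
    Subgroup (Equiv.Perm (Fin N)) where
  carrier := {w | ∀ i, b (w i) = b i}
  one_mem' := fun i => rfl
  mul_mem' := by
    intro w w' hw hw' i
    rw [Equiv.Perm.mul_apply, hw, hw']
  inv_mem' := by
    intro w hw i
    have := hw (w⁻¹ i)
    rw [← Equiv.Perm.mul_apply, mul_inv_cancel, Equiv.Perm.one_apply] at this
    exact this.symm

/-- The additive group structure of `D` (coming from its ring structure), registered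
so that instance search finds it for the quotient below. -/
instance SmashD.instAddCommGroup (K : Type) [Field K] (N : ℕ) (q : Kˣ) :
    AddCommGroup (SmashD K N q) :=
  Ring.toAddCommGroup

open scoped TensorProduct

/-- The `D`-submodule of `D ⊗_K S` spanned by the relations `d·γ ⊗ s − d ⊗ γ·s`
for `γ` among the generators `Y_i`, `Y_i^{-1}`, `s_w` (`w ∈ W_J`) of `Γ_J`,
acting on `b ⊠ S` (with `Y_i^{±1}` acting by `b_i^{±1}` and `s_w` by `w`).
The quotient by it is the relative tensor product `D ⊗_{Γ_J} (b ⊠ S)`. -/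
def indRelb (K : Type) [Field K] (N : ℕ) (q : Kˣ) (b : Fin N → Kˣ) (S : Type)
    [AddCommGroup S] [Module K S] [DistribMulAction ↥(permStab K N b) S]
    [SMulCommClass ↥(permStab K N b) K S] :
    Submodule (SmashD K N q) (SmashD K N q ⊗[K] S) :=
  Submodule.span (SmashD K N q)
    ({x | ∃ (d : SmashD K N q) (i : Fin N) (s : S),
        x = (d * Ye K q i) ⊗ₜ[K] s - d ⊗ₜ[K] ((b i : K) • s)} ∪
     {x | ∃ (d : SmashD K N q) (i : Fin N) (s : S),
        x = (d * YeInv K q i) ⊗ₜ[K] s - d ⊗ₜ[K] ((((b i)⁻¹ : Kˣ) : K) • s)} ∪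
     {x | ∃ (d : SmashD K N q) (w : ↥(permStab K N b)) (s : S),
        x = (d * Se K q (w : Equiv.Perm (Fin N))) ⊗ₜ[K] s - d ⊗ₜ[K] (w • s)})

/-!
The induced module `D ⊗_{Γ_J} (b ⊠ S)` is identified with the `S`-valued finitely supported
functions on `ℤ^N × S_N/W_J`, the copy of `S` at `(a, c)` standing for `X^a s_c ⊗ S`. In this model
`Y_i` acts on the copy at `(a, c)` by the scalar `q^{a_i} b_{c⁻¹(i)}`; as `q` is not a root of unity
and distinct `b_i` differ by no power of `q`, these joint eigenvalues separate the points
`(a, c)`. Hence a nonzero submodule contains a nonzero vector supported at a single point, which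
the unit `(X^a s_c)⁻¹` moves to the point `(0, W_J)`. There the submodule meets `S` in a nonzero
`W_J`-stable subspace, which is all of `S` by simplicity, and `S` at `(0, W_J)` generates the model.

The map from the model back to the induced module, `(a, c, s) ↦ X^a s_c ⊗ s`, is `D`-linear because
it commutes with the generators of `D` modulo the relations defining `⊗_{Γ_J}`; its composites with
the evident map `d ⊗ s ↦ d • (0, W_J, s)` are identities.
-/

theorem Pi.int_step_induction {ι : Type*} [Fintype ι] [DecidableEq ι] {P : (ι → ℤ) → Prop}
    (zero : P 0) (add_single : ∀ a i, P a → P (a + Pi.single i 1))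
    (add_single_neg : ∀ a i, P a → P (a + Pi.single i (-1))) (a : ι → ℤ) : P a := by
  have add_single_int : ∀ a i (k : ℤ), P a → P (a + Pi.single i k) := by
    intro a i k ha
    induction k using Int.induction_on with
    | zero => simpa using ha
    | succ n ih => simpa [Pi.single_add, add_assoc] using add_single _ i ih
    | pred n ih => simpa [Pi.single_add, add_assoc, sub_eq_add_neg] using add_single_neg _ i ih
  rw [← Finset.univ_sum_single a]
  induction (Finset.univ : Finset ι) using Finset.induction_on with
  | empty => simpa using zero
  | insert i s hi ih => rw [Finset.sum_insert hi, add_comm]; exact add_single_int _ i _ ih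

theorem Pi.add_single_comp_perm_inv {ι M : Type*} [DecidableEq ι] [AddMonoid M]
    (a : ι → M) (w : Equiv.Perm ι) (i : ι) (k : M) :
    (a + Pi.single i k) ∘ ⇑w⁻¹ = a ∘ ⇑w⁻¹ + Pi.single (w i) k := by
  ext x
  simp [Pi.single_apply, Equiv.symm_apply_eq]

theorem LinearMap.map_smul_of_adjoin_eq_top {R A M P : Type*} [CommSemiring R] [Semiring A]
    [Algebra R A] [AddCommMonoid M] [Module R M] [Module A M] [IsScalarTower R A M]
    [AddCommMonoid P] [Module R P] [Module A P] [IsScalarTower R A P] {s : Set A}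
    (hs : Algebra.adjoin R s = ⊤) (f : M →ₗ[R] P) (hf : ∀ x ∈ s, ∀ m, f (x • m) = x • f m)
    (a : A) (m : M) : f (a • m) = a • f m := by
  have ha : a ∈ Algebra.adjoin R s := hs ▸ Algebra.mem_top
  induction ha using Algebra.adjoin_induction generalizing m with
  | mem x hx => exact hf x hx m
  | algebraMap r => simp only [algebraMap_smul, map_smul]
  | add x y _ _ hx hy => simp only [add_smul, map_add, hx, hy]
  | mul x y _ _ hx hy => simp only [mul_smul, hx, hy]

theorem Units.map_inv_smul_of_map_smul {A M P : Type*} [Monoid A] [MulAction A M] [MulAction A P]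
    (f : M → P) (u : Aˣ) (hu : ∀ m, f ((u : A) • m) = (u : A) • f m) (m : M) :
    f (((u⁻¹ : Aˣ) : A) • m) = ((u⁻¹ : Aˣ) : A) • f m := by
  rw [← Units.smul_def, ← Units.smul_def, eq_inv_smul_iff, Units.smul_def, ← hu, ← Units.smul_def,
    smul_inv_smul]

def Finsupp.monomialMap {ι κ R M P : Type*} [CommSemiring R] [AddCommMonoid M] [Module R M]
    [AddCommMonoid P] [Module R P] (σ : ι → κ) (τ : ι → M →ₗ[R] P) : (ι →₀ M) →ₗ[R] (κ →₀ P) :=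
  Finsupp.lsum R fun i => (Finsupp.lsingle (σ i)).comp (τ i)

@[simp] theorem Finsupp.monomialMap_single {ι κ R M P : Type*} [CommSemiring R] [AddCommMonoid M]
    [Module R M] [AddCommMonoid P] [Module R P] (σ : ι → κ) (τ : ι → M →ₗ[R] P) (i : ι) (m : M) :
    Finsupp.monomialMap σ τ (Finsupp.single i m) = Finsupp.single (σ i) (τ i m) := by
  simp [Finsupp.monomialMap]

theorem Finsupp.exists_single_mem_of_diagonal {ι J K S : Type*} [Field K] [AddCommGroup S]
    [Module K S] (χ : ι → J → K) (hχ : Function.Injective χ) (V : Submodule K (ι →₀ S))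
    (hV : ∀ j, ∀ m ∈ V, ∃ m' ∈ V, ∀ p, m' p = χ p j • m p) {m : ι →₀ S} (hm : m ∈ V)
    (hm0 : m ≠ 0) : ∃ p s, s ≠ 0 ∧ Finsupp.single p s ∈ V := by
  classical
  induction h : m.support.card using Nat.strong_induction_on generalizing m with
  | _ n ih =>
  obtain ⟨k, hk⟩ := Finsupp.support_nonempty_iff.mpr hm0
  by_cases hsub : m.support ⊆ {k}
  · obtain ⟨s, rfl⟩ := Finsupp.support_subset_singleton'.mp hsub
    exact ⟨k, s, by simpa using hm0, hm⟩
  obtain ⟨l, hl, hlk⟩ := Finset.not_subset.mp hsub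
  obtain ⟨j, hj⟩ : ∃ j, χ l j ≠ χ k j := by
    by_contra! h
    exact hlk (Finset.mem_singleton.mpr (hχ (funext h)))
  -- `m' - χ l j • m` lies in `V`, vanishes at `l` and not at `k`: its support is smaller.
  obtain ⟨m', hm'V, hm'⟩ := hV j m hm
  have hm'' (p : ι) : (m' - χ l j • m) p = (χ p j - χ l j) • m p := by
    simp [hm', sub_smul]
  have hsupp : (m' - χ l j • m).support ⊆ m.support.erase l := fun p hp => by
    rw [Finsupp.mem_support_iff, hm''] at hp
    refine Finset.mem_erase.mpr ⟨?_, Finsupp.mem_support_iff.mpr fun h0 => hp (by simp [h0])⟩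
    rintro rfl
    simp at hp
  refine @ih _ ?_ (m' - χ l j • m) (V.sub_mem hm'V (V.smul_mem _ hm)) (fun h0 => ?_) rfl
  · exact h ▸ Finset.card_lt_card
      (Finset.ssubset_of_subset_of_ssubset hsupp (Finset.erase_ssubset hl))
  · have := hm'' k
    rw [h0, Finsupp.zero_apply, eq_comm] at this
    exact smul_ne_zero (sub_ne_zero.mpr hj.symm) (Finsupp.mem_support_iff.mp hk) this

namespace SmashD

variable {K : Type} [Field K] {N : ℕ} {q : Kˣ}

/-! ### Generators and relations of `D` -/

def Xe (K : Type) [Field K] {N : ℕ} (q : Kˣ) (i : Fin N) : SmashD K N q :=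
  RingQuot.mkAlgHom K (SRel K N q) (sg K (.X i))

def XeInv (K : Type) [Field K] {N : ℕ} (q : Kˣ) (i : Fin N) : SmashD K N q :=
  RingQuot.mkAlgHom K (SRel K N q) (sg K (.Xinv i))

theorem adjoin_generators_eq_top :
    Algebra.adjoin K (Set.range fun g : SGen N => RingQuot.mkAlgHom K (SRel K N q) (sg K g)) =
      ⊤ := by
  rw [Set.range_comp', Algebra.adjoin_image,
    show Set.range (sg K) = Set.range (FreeAlgebra.ι K) from rfl, FreeAlgebra.adjoin_range_ι,
    Algebra.map_top, AlgHom.range_eq_top]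
  exact RingQuot.mkAlgHom_surjective K _

theorem Xe_mul_XeInv (i : Fin N) : Xe K q i * XeInv K q i = 1 := by
  simpa [Xe, XeInv] using RingQuot.mkAlgHom_rel K (SRel.XXinv (K := K) (q := q) i)

theorem XeInv_mul_Xe (i : Fin N) : XeInv K q i * Xe K q i = 1 := by
  simpa [Xe, XeInv] using RingQuot.mkAlgHom_rel K (SRel.XinvX (K := K) (q := q) i)

theorem Ye_mul_YeInv (i : Fin N) : Ye K q i * YeInv K q i = 1 := by
  simpa [Ye, YeInv] using RingQuot.mkAlgHom_rel K (SRel.YYinv (K := K) (q := q) i)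

theorem YeInv_mul_Ye (i : Fin N) : YeInv K q i * Ye K q i = 1 := by
  simpa [Ye, YeInv] using RingQuot.mkAlgHom_rel K (SRel.YinvY (K := K) (q := q) i)

theorem Xe_mul_Xe_comm (i j : Fin N) : Xe K q i * Xe K q j = Xe K q j * Xe K q i := by
  simpa [Xe] using RingQuot.mkAlgHom_rel K (SRel.XX (K := K) (q := q) i j)

theorem Ye_mul_Xe (i j : Fin N) :
    Ye K q i * Xe K q j =
      ((q ^ (Pi.single j 1 : Fin N → ℤ) i : Kˣ) : K) • (Xe K q j * Ye K q i) := by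
  rcases eq_or_ne i j with rfl | hij
  · simpa [Xe, Ye] using RingQuot.mkAlgHom_rel K (SRel.YXeq (K := K) (q := q) i)
  · simpa [Xe, Ye, hij] using RingQuot.mkAlgHom_rel K (SRel.YXne (K := K) (q := q) i j hij)

theorem Se_mul_Se (w w' : Equiv.Perm (Fin N)) : Se K q w * Se K q w' = Se K q (w * w') := by
  simpa [Se] using RingQuot.mkAlgHom_rel K (SRel.Smul (K := K) (q := q) w w')

theorem Se_one : Se K q (1 : Equiv.Perm (Fin N)) = 1 := by
  simpa [Se] using RingQuot.mkAlgHom_rel K (SRel.Sone (K := K) (N := N) (q := q))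

theorem Se_mul_Xe (w : Equiv.Perm (Fin N)) (i : Fin N) :
    Se K q w * Xe K q i = Xe K q (w i) * Se K q w := by
  simpa [Se, Xe] using RingQuot.mkAlgHom_rel K (SRel.SX (K := K) (q := q) w i)

theorem Se_mul_Ye (w : Equiv.Perm (Fin N)) (i : Fin N) :
    Se K q w * Ye K q i = Ye K q (w i) * Se K q w := by
  simpa [Se, Ye] using RingQuot.mkAlgHom_rel K (SRel.SY (K := K) (q := q) w i)

def xUnit (K : Type) [Field K] {N : ℕ} (q : Kˣ) (i : Fin N) : (SmashD K N q)ˣ :=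
  ⟨Xe K q i, XeInv K q i, Xe_mul_XeInv i, XeInv_mul_Xe i⟩

def yUnit (K : Type) [Field K] {N : ℕ} (q : Kˣ) (i : Fin N) : (SmashD K N q)ˣ :=
  ⟨Ye K q i, YeInv K q i, Ye_mul_YeInv i, YeInv_mul_Ye i⟩

def sUnit (K : Type) [Field K] {N : ℕ} (q : Kˣ) (w : Equiv.Perm (Fin N)) : (SmashD K N q)ˣ :=
  ⟨Se K q w, Se K q w⁻¹, by rw [Se_mul_Se, mul_inv_cancel, Se_one],
    by rw [Se_mul_Se, inv_mul_cancel, Se_one]⟩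

theorem val_sUnit (w : Equiv.Perm (Fin N)) : (sUnit K q w : SmashD K N q) = Se K q w := rfl

theorem Ye_mul_XeInv (i j : Fin N) :
    Ye K q i * XeInv K q j =
      ((q ^ (Pi.single j (-1) : Fin N → ℤ) i : Kˣ) : K) • (XeInv K q j * Ye K q i) := by
  have h : XeInv K q j * (Ye K q i * Xe K q j) * XeInv K q j
      = ((q ^ (Pi.single j 1 : Fin N → ℤ) i : Kˣ) : K) • (Ye K q i * XeInv K q j) := by
    rw [Ye_mul_Xe, mul_smul_comm, smul_mul_assoc, ← mul_assoc (XeInv K q j), XeInv_mul_Xe,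
      one_mul]
  rw [mul_assoc, mul_assoc, Xe_mul_XeInv, mul_one] at h
  rw [h, smul_smul, ← Units.val_mul, Pi.single_neg, Pi.neg_apply, zpow_neg, inv_mul_cancel,
    Units.val_one, one_smul]

theorem Se_mul_XeInv (w : Equiv.Perm (Fin N)) (i : Fin N) :
    Se K q w * XeInv K q i = XeInv K q (w i) * Se K q w :=
  SemiconjBy.units_inv_right (x := xUnit K q i) (y := xUnit K q (w i)) (Se_mul_Xe w i)

/-! ### Laurent monomials `X^a` -/

def xSubgroup (K : Type) [Field K] (N : ℕ) (q : Kˣ) : Subgroup (SmashD K N q)ˣ :=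
  Subgroup.closure (Set.range (xUnit K q))

instance : IsMulCommutative (xSubgroup K N q) :=
  Subgroup.isMulCommutative_closure <| by
    rintro _ ⟨i, rfl⟩ _ ⟨j, rfl⟩
    exact Units.ext (Xe_mul_Xe_comm i j)

open scoped IsMulCommutative

def monomial (K : Type) [Field K] {N : ℕ} (q : Kˣ) (a : Fin N → ℤ) : (SmashD K N q)ˣ :=
  (∏ i, (⟨xUnit K q i, Subgroup.subset_closure ⟨i, rfl⟩⟩ : xSubgroup K N q) ^ a i :
    xSubgroup K N q)

theorem monomial_zero : monomial K q (0 : Fin N → ℤ) = 1 := by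
  simp [monomial]

theorem monomial_add_single (a : Fin N → ℤ) (i : Fin N) (k : ℤ) :
    monomial K q (a + Pi.single i k) = xUnit K q i ^ k * monomial K q a := by
  simp only [monomial, Pi.add_apply, zpow_add, Finset.prod_mul_distrib]
  rw [mul_comm, Finset.prod_eq_single i (fun j _ hj => by simp [hj]) (by simp)]
  simp

theorem val_monomial_add_single_one (a : Fin N → ℤ) (i : Fin N) :
    (monomial K q (a + Pi.single i 1) : SmashD K N q) = Xe K q i * monomial K q a := by
  rw [monomial_add_single, zpow_one]; rfl

theorem val_monomial_add_single_neg_one (a : Fin N → ℤ) (i : Fin N) :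
    (monomial K q (a + Pi.single i (-1)) : SmashD K N q) = XeInv K q i * monomial K q a := by
  rw [monomial_add_single, zpow_neg_one]; rfl

theorem Ye_mul_monomial (i : Fin N) (a : Fin N → ℤ) :
    Ye K q i * monomial K q a =
      ((q ^ a i : Kˣ) : K) • ((monomial K q a : SmashD K N q) * Ye K q i) := by
  induction a using Pi.int_step_induction with
  | zero => simp [monomial_zero]
  | add_single a j ih =>
    rw [val_monomial_add_single_one, ← mul_assoc, Ye_mul_Xe, smul_mul_assoc, mul_assoc, ih,
      mul_smul_comm, smul_smul, ← mul_assoc, ← val_monomial_add_single_one, ← Units.val_mul,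
      ← zpow_add, Pi.add_apply, add_comm]
  | add_single_neg a j ih =>
    rw [val_monomial_add_single_neg_one, ← mul_assoc, Ye_mul_XeInv, smul_mul_assoc, mul_assoc, ih,
      mul_smul_comm, smul_smul, ← mul_assoc, ← val_monomial_add_single_neg_one, ← Units.val_mul,
      ← zpow_add, Pi.add_apply, add_comm]

theorem Se_mul_monomial (w : Equiv.Perm (Fin N)) (a : Fin N → ℤ) :
    Se K q w * monomial K q a = monomial K q (a ∘ ⇑w⁻¹) * Se K q w := by
  induction a using Pi.int_step_induction with
  | zero => simp [monomial_zero]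
  | add_single a j ih =>
    rw [val_monomial_add_single_one, ← mul_assoc, Se_mul_Xe, mul_assoc, ih,
      Pi.add_single_comp_perm_inv, val_monomial_add_single_one, mul_assoc]
  | add_single_neg a j ih =>
    rw [val_monomial_add_single_neg_one, ← mul_assoc, Se_mul_XeInv, mul_assoc, ih,
      Pi.add_single_comp_perm_inv, val_monomial_add_single_neg_one, mul_assoc]

/-! ### Cosets of `W_J` and the weights of `Y` -/

section Cosets

variable {b : Fin N → Kˣ}

abbrev Cosets (K : Type) [Field K] (N : ℕ) (b : Fin N → Kˣ) :=
  Equiv.Perm (Fin N) ⧸ permStab K N b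

def baseCoset (K : Type) [Field K] (N : ℕ) (b : Fin N → Kˣ) : Cosets K N b :=
  ((1 : Equiv.Perm (Fin N)) : Cosets K N b)

open Classical in
def cosetRep (c : Cosets K N b) : Equiv.Perm (Fin N) :=
  if c = baseCoset K N b then 1 else c.out

theorem coe_cosetRep (c : Cosets K N b) : (cosetRep c : Cosets K N b) = c := by
  unfold cosetRep
  split_ifs with h
  · exact h.symm
  · exact QuotientGroup.out_eq' c

theorem cosetRep_baseCoset : cosetRep (baseCoset K N b) = 1 := if_pos rfl

theorem smul_coe (w u : Equiv.Perm (Fin N)) :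
    w • (u : Cosets K N b) = ((w * u : Equiv.Perm (Fin N)) : Cosets K N b) := rfl

theorem cosetRep_smul_baseCoset (c : Cosets K N b) : cosetRep c • baseCoset K N b = c := by
  rw [baseCoset, smul_coe, mul_one, coe_cosetRep]

theorem smul_baseCoset_of_mem (v : permStab K N b) :
    (v : Equiv.Perm (Fin N)) • baseCoset K N b = baseCoset K N b := by
  rw [baseCoset, smul_coe, mul_one, QuotientGroup.eq, mul_one, inv_mem_iff]
  exact v.2

/-- The cocycle of the induced representation. -/
def twist (w : Equiv.Perm (Fin N)) (c : Cosets K N b) : permStab K N b :=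
  ⟨(cosetRep (w • c))⁻¹ * (w * cosetRep c), by
    rw [← QuotientGroup.eq, coe_cosetRep, ← smul_coe, coe_cosetRep]⟩

theorem coe_twist (w : Equiv.Perm (Fin N)) (c : Cosets K N b) :
    (twist w c : Equiv.Perm (Fin N)) = (cosetRep (w • c))⁻¹ * (w * cosetRep c) := rfl

theorem cosetRep_mul_twist (w : Equiv.Perm (Fin N)) (c : Cosets K N b) :
    cosetRep (w • c) * twist w c = w * cosetRep c :=
  mul_inv_cancel_left _ _

theorem twist_mul (w w' : Equiv.Perm (Fin N)) (c : Cosets K N b) :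
    twist (w * w') c = twist w (w' • c) * twist w' c := by
  ext1
  simp only [coe_twist, Subgroup.coe_mul, mul_smul]
  group

theorem twist_one (c : Cosets K N b) : twist 1 c = 1 := by
  ext1
  simp [coe_twist]

theorem twist_baseCoset_of_mem (v : permStab K N b) :
    twist (v : Equiv.Perm (Fin N)) (baseCoset K N b) = v := by
  ext1
  simp [coe_twist, smul_baseCoset_of_mem, cosetRep_baseCoset]

theorem twist_cosetRep_baseCoset (c : Cosets K N b) :
    twist (cosetRep c) (baseCoset K N b) = 1 := by
  ext1
  simp [coe_twist, cosetRep_smul_baseCoset, cosetRep_baseCoset]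

def cosetWeight (c : Cosets K N b) (i : Fin N) : Kˣ := b ((cosetRep c)⁻¹ i)

theorem cosetWeight_baseCoset (i : Fin N) : cosetWeight (baseCoset K N b) i = b i := by
  simp [cosetWeight, cosetRep_baseCoset]

theorem cosetWeight_smul (w : Equiv.Perm (Fin N)) (c : Cosets K N b) (i : Fin N) :
    cosetWeight (w • c) (w i) = cosetWeight c i := by
  have h : (cosetRep (w • c))⁻¹ (w i) = (twist w c : Equiv.Perm (Fin N)) ((cosetRep c)⁻¹ i) := by
    simp [coe_twist, Equiv.Perm.mul_apply]
  rw [cosetWeight, cosetWeight, h]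
  exact (twist w c).2 _

theorem cosetWeight_injective :
    Function.Injective (cosetWeight (K := K) (N := N) (b := b)) := by
  intro c c' h
  rw [← coe_cosetRep c, ← coe_cosetRep c', QuotientGroup.eq]
  intro i
  simpa [cosetWeight, Equiv.Perm.mul_apply] using congrFun h (cosetRep c' i)

abbrev ModelIndex (K : Type) [Field K] (N : ℕ) (b : Fin N → Kˣ) := (Fin N → ℤ) × Cosets K N b

def weight (q : Kˣ) (p : ModelIndex K N b) (i : Fin N) : Kˣ :=
  q ^ p.1 i * cosetWeight p.2 i

theorem weight_base (i : Fin N) : weight q (0, baseCoset K N b) i = b i := by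
  simp [weight, cosetWeight_baseCoset]

theorem weight_add_single (p : ModelIndex K N b) (i j : Fin N) (k : ℤ) :
    weight q (p.1 + Pi.single j k, p.2) i = q ^ (Pi.single j k : Fin N → ℤ) i * weight q p i := by
  simp only [weight, Pi.add_apply, zpow_add]
  group

theorem weight_smul (p : ModelIndex K N b) (w : Equiv.Perm (Fin N)) (i : Fin N) :
    weight q (p.1 ∘ ⇑w⁻¹, w • p.2) (w i) = weight q p i := by
  simp [weight, cosetWeight_smul]

theorem weight_injective (hq : ∀ m : ℕ, m ≠ 0 → (q : K) ^ m ≠ 1)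
    (hb : ∀ i j : Fin N, b i ≠ b j → ∀ z : ℤ, b i / b j ≠ q ^ z) :
    Function.Injective (weight q : ModelIndex K N b → Fin N → Kˣ) := by
  have hq : Function.Injective (fun n : ℤ => q ^ n) :=
    injective_zpow_iff_not_isOfFinOrder.mpr fun h => by
      obtain ⟨n, hn, hqn⟩ := isOfFinOrder_iff_pow_eq_one.mp h
      exact hq n hn.ne' (by simpa using congrArg Units.val hqn)
  rintro ⟨a, c⟩ ⟨a', c'⟩ h
  have hw (i : Fin N) : q ^ a i * cosetWeight c i = q ^ a' i * cosetWeight c' i := congrFun h i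
  have hc : cosetWeight c = cosetWeight c' := by
    ext1 i
    by_contra hne
    refine hb _ _ hne (a' i - a i) ?_
    change cosetWeight c i / cosetWeight c' i = _
    rw [div_eq_iff_eq_mul, zpow_sub, ← mul_right_inj (q ^ a i), hw i]
    group
  have ha : a = a' := funext fun i => hq (mul_right_cancel (by rw [hw i, hc]))
  rw [ha, cosetWeight_injective hc]

def basisUnit (K : Type) [Field K] {N : ℕ} (q : Kˣ) {b : Fin N → Kˣ} (p : ModelIndex K N b) :
    (SmashD K N q)ˣ :=
  monomial K q p.1 * sUnit K q (cosetRep p.2)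

theorem basisUnit_base : basisUnit K q (0, baseCoset K N b) = 1 := by
  ext1
  simp [basisUnit, monomial_zero, cosetRep_baseCoset, sUnit, Se_one]

theorem basisUnit_add_single_one (p : ModelIndex K N b) (i : Fin N) :
    (basisUnit K q (p.1 + Pi.single i 1, p.2) : SmashD K N q) = Xe K q i * basisUnit K q p := by
  simp only [basisUnit, Units.val_mul, val_monomial_add_single_one, mul_assoc]

theorem basisUnit_add_single_neg_one (p : ModelIndex K N b) (i : Fin N) :
    (basisUnit K q (p.1 + Pi.single i (-1), p.2) : SmashD K N q) =
      XeInv K q i * basisUnit K q p := by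
  simp only [basisUnit, Units.val_mul, val_monomial_add_single_neg_one, mul_assoc]

theorem Ye_mul_basisUnit (i : Fin N) (p : ModelIndex K N b) :
    Ye K q i * basisUnit K q p =
      ((q ^ p.1 i : Kˣ) : K) •
        ((basisUnit K q p : SmashD K N q) * Ye K q ((cosetRep p.2)⁻¹ i)) := by
  rw [basisUnit, Units.val_mul, ← mul_assoc, Ye_mul_monomial, smul_mul_assoc, mul_assoc,
    mul_assoc, val_sUnit, Se_mul_Ye, ← Equiv.Perm.mul_apply, mul_inv_cancel,
    Equiv.Perm.one_apply]

theorem Se_mul_basisUnit (w : Equiv.Perm (Fin N)) (p : ModelIndex K N b) :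
    Se K q w * (basisUnit K q p : SmashD K N q) =
      (basisUnit K q (p.1 ∘ ⇑w⁻¹, w • p.2) : SmashD K N q) *
        Se K q (twist w p.2 : Equiv.Perm (Fin N)) := by
  rw [basisUnit, basisUnit, Units.val_mul, Units.val_mul, ← mul_assoc, Se_mul_monomial,
    mul_assoc, mul_assoc, val_sUnit, val_sUnit, Se_mul_Se, Se_mul_Se, cosetRep_mul_twist]

end Cosets

/-! ### The model of the induced module -/

section Model

variable {b : Fin N → Kˣ} {S : Type} [AddCommGroup S] [Module K S]
  [DistribMulAction (permStab K N b) S] [SMulCommClass (permStab K N b) K S]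

/-- `Finsupp.single (a, c) s` models `X^a s_{cosetRep c} ⊗ s`. -/
abbrev Model (K : Type) [Field K] (N : ℕ) (b : Fin N → Kˣ) (S : Type) [AddCommGroup S]
    [Module K S] :=
  ModelIndex K N b →₀ S

def generatorAction (K : Type) [Field K] {N : ℕ} (q : Kˣ) (b : Fin N → Kˣ) (S : Type)
    [AddCommGroup S] [Module K S] [DistribMulAction (permStab K N b) S]
    [SMulCommClass (permStab K N b) K S] :
    SGen N → Module.End K (Model K N b S)
  | .X i => Finsupp.monomialMap (fun p => (p.1 + Pi.single i 1, p.2)) fun _ => LinearMap.id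
  | .Xinv i => Finsupp.monomialMap (fun p => (p.1 + Pi.single i (-1), p.2)) fun _ => LinearMap.id
  | .Y i => Finsupp.monomialMap id fun p => (weight q p i : K) • LinearMap.id
  | .Yinv i => Finsupp.monomialMap id fun p => (((weight q p i)⁻¹ : Kˣ) : K) • LinearMap.id
  | .S w => Finsupp.monomialMap (fun p => (p.1 ∘ ⇑w⁻¹, w • p.2))
      fun p => DistribSMul.toLinearMap K S (twist w p.2)

section generatorAction

variable (p : ModelIndex K N b) (s : S)

@[simp] theorem generatorAction_X_single (i : Fin N) :
    generatorAction K q b S (.X i) (Finsupp.single p s) =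
      Finsupp.single (p.1 + Pi.single i 1, p.2) s := by
  simp [generatorAction]

@[simp] theorem generatorAction_Xinv_single (i : Fin N) :
    generatorAction K q b S (.Xinv i) (Finsupp.single p s) =
      Finsupp.single (p.1 + Pi.single i (-1), p.2) s := by
  simp [generatorAction]

@[simp] theorem generatorAction_Y_single (i : Fin N) :
    generatorAction K q b S (.Y i) (Finsupp.single p s) =
      Finsupp.single p ((weight q p i : K) • s) := by
  simp [generatorAction]

@[simp] theorem generatorAction_Yinv_single (i : Fin N) :
    generatorAction K q b S (.Yinv i) (Finsupp.single p s) =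
      Finsupp.single p ((((weight q p i)⁻¹ : Kˣ) : K) • s) := by
  simp [generatorAction]

@[simp] theorem generatorAction_S_single (w : Equiv.Perm (Fin N)) :
    generatorAction K q b S (.S w) (Finsupp.single p s) =
      Finsupp.single (p.1 ∘ ⇑w⁻¹, w • p.2) (twist w p.2 • s) := by
  simp [generatorAction]

end generatorAction

theorem generatorAction_rel {x y : FreeAlgebra K (SGen N)} (h : SRel K N q x y) :
    FreeAlgebra.lift K (generatorAction K q b S) x =
      FreeAlgebra.lift K (generatorAction K q b S) y := by
  induction h <;> refine Finsupp.lhom_ext fun p s => ?_ <;>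
    simp only [sg, map_mul, map_one, map_smul, FreeAlgebra.lift_ι_apply, Module.End.mul_apply,
      Module.End.one_apply, LinearMap.smul_apply, generatorAction_X_single,
      generatorAction_Xinv_single, generatorAction_Y_single, generatorAction_Yinv_single,
      generatorAction_S_single, Finsupp.smul_single]
  case XX => rw [add_right_comm]
  case XXinv | XinvX => simp [add_assoc, ← Pi.single_add]
  case YY => rw [smul_comm]
  case YYinv | YinvY => simp [smul_smul]
  case YXne i j hij => rw [weight_add_single, Pi.single_eq_of_ne hij, zpow_zero, one_mul]
  case YXeq => rw [weight_add_single, Pi.single_eq_same, zpow_one, Units.val_mul, mul_smul]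
  case Smul w w' => rw [twist_mul, mul_smul, mul_smul, mul_inv_rev, Equiv.Perm.coe_mul]; rfl
  case Sone => simp [twist_one]
  case SX => rw [Pi.add_single_comp_perm_inv]
  case SY => rw [weight_smul, smul_comm]

def modelAction (K : Type) [Field K] {N : ℕ} (q : Kˣ) (b : Fin N → Kˣ) (S : Type)
    [AddCommGroup S] [Module K S] [DistribMulAction (permStab K N b) S]
    [SMulCommClass (permStab K N b) K S] :
    SmashD K N q →ₐ[K] Module.End K (Model K N b S) :=
  RingQuot.liftAlgHom K
    ⟨FreeAlgebra.lift K (generatorAction K q b S), fun _ _ h => generatorAction_rel h⟩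

instance : Module (SmashD K N q) (Model K N b S) :=
  Module.compHom _ (modelAction K q b S).toRingHom

theorem smul_def (d : SmashD K N q) (m : Model K N b S) : d • m = modelAction K q b S d m := rfl

instance : IsScalarTower K (SmashD K N q) (Model K N b S) :=
  ⟨fun k d m => by rw [smul_def, smul_def, map_smul]; rfl⟩

instance : SMulCommClass K (SmashD K N q) (Model K N b S) :=
  ⟨fun k d m => by rw [smul_def, smul_def, map_smul]⟩

theorem mk_sg_smul (g : SGen N) (m : Model K N b S) :
    RingQuot.mkAlgHom K (SRel K N q) (sg K g) • m = generatorAction K q b S g m := by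
  simp [smul_def, modelAction, sg]

section smul_single

variable (p : ModelIndex K N b) (s : S)

theorem Xe_smul_single (i : Fin N) :
    Xe K q i • Finsupp.single p s = Finsupp.single (p.1 + Pi.single i 1, p.2) s :=
  (mk_sg_smul _ _).trans (generatorAction_X_single ..)

theorem XeInv_smul_single (i : Fin N) :
    XeInv K q i • Finsupp.single p s = Finsupp.single (p.1 + Pi.single i (-1), p.2) s :=
  (mk_sg_smul _ _).trans (generatorAction_Xinv_single ..)

theorem Ye_smul_single (i : Fin N) :
    Ye K q i • Finsupp.single p s = Finsupp.single p ((weight q p i : K) • s) :=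
  (mk_sg_smul _ _).trans (generatorAction_Y_single ..)

theorem YeInv_smul_single (i : Fin N) :
    YeInv K q i • Finsupp.single p s =
      Finsupp.single p ((((weight q p i)⁻¹ : Kˣ) : K) • s) :=
  (mk_sg_smul _ _).trans (generatorAction_Yinv_single ..)

theorem Se_smul_single (w : Equiv.Perm (Fin N)) :
    Se K q w • Finsupp.single p s =
      Finsupp.single (p.1 ∘ ⇑w⁻¹, w • p.2) (twist w p.2 • s) :=
  (mk_sg_smul _ _).trans (generatorAction_S_single ..)

theorem monomial_smul_single (a : Fin N → ℤ) :
    (monomial K q a : SmashD K N q) • Finsupp.single p s = Finsupp.single (p.1 + a, p.2) s := by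
  induction a using Pi.int_step_induction with
  | zero => simp [monomial_zero]
  | add_single a i ih =>
    rw [val_monomial_add_single_one, mul_smul, ih, Xe_smul_single, add_assoc]
  | add_single_neg a i ih =>
    rw [val_monomial_add_single_neg_one, mul_smul, ih, XeInv_smul_single, add_assoc]

end smul_single

theorem Ye_smul_apply (i : Fin N) (m : Model K N b S) (p : ModelIndex K N b) :
    (Ye K q i • m) p = (weight q p i : K) • m p := by
  induction m using Finsupp.induction_linear with
  | zero => simp
  | add f g hf hg => simp [hf, hg]
  | single p' s =>
    rw [Ye_smul_single]
    rcases eq_or_ne p' p with rfl | h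
    · simp
    · simp [Finsupp.single_eq_of_ne' h]

theorem basisUnit_smul_single (p : ModelIndex K N b) (s : S) :
    (basisUnit K q p : SmashD K N q) • Finsupp.single (0, baseCoset K N b) s =
      Finsupp.single p s := by
  rw [basisUnit, Units.val_mul, mul_smul, val_sUnit, Se_smul_single]
  simp [twist_cosetRep_baseCoset, cosetRep_smul_baseCoset, monomial_smul_single]

theorem Se_smul_single_base (v : permStab K N b) (s : S) :
    Se K q (v : Equiv.Perm (Fin N)) • (Finsupp.single (0, baseCoset K N b) s : Model K N b S) =
      Finsupp.single (0, baseCoset K N b) (v • s) := by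
  rw [Se_smul_single, twist_baseCoset_of_mem, smul_baseCoset_of_mem]
  rfl

end Model

/-! ### The induced module is isomorphic to the model -/

section Induced

open scoped TensorProduct

variable {b : Fin N → Kˣ} {S : Type} [AddCommGroup S] [Module K S]
  [DistribMulAction (permStab K N b) S] [SMulCommClass (permStab K N b) K S]

theorem mkQ_mul_Ye_tmul (d : SmashD K N q) (i : Fin N) (s : S) :
    (indRelb K N q b S).mkQ ((d * Ye K q i) ⊗ₜ[K] s) =
      (indRelb K N q b S).mkQ (d ⊗ₜ[K] ((b i : K) • s)) :=
  (Submodule.Quotient.eq _).mpr (Submodule.subset_span (Or.inl (Or.inl ⟨d, i, s, rfl⟩)))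

theorem mkQ_mul_Se_tmul (d : SmashD K N q) (v : permStab K N b) (s : S) :
    (indRelb K N q b S).mkQ ((d * Se K q v) ⊗ₜ[K] s) =
      (indRelb K N q b S).mkQ (d ⊗ₜ[K] (v • s)) :=
  (Submodule.Quotient.eq _).mpr (Submodule.subset_span (Or.inr ⟨d, v, s, rfl⟩))

theorem smul_mkQ_tmul (x d : SmashD K N q) (s : S) :
    x • (indRelb K N q b S).mkQ (d ⊗ₜ[K] s) = (indRelb K N q b S).mkQ ((x * d) ⊗ₜ[K] s) := by
  rw [← map_smul, TensorProduct.smul_tmul', smul_eq_mul]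

def tensorToModel (K : Type) [Field K] {N : ℕ} (q : Kˣ) (b : Fin N → Kˣ) (S : Type)
    [AddCommGroup S] [Module K S] [DistribMulAction (permStab K N b) S]
    [SMulCommClass (permStab K N b) K S] :
    SmashD K N q ⊗[K] S →ₗ[SmashD K N q] Model K N b S :=
  TensorProduct.AlgebraTensorModule.lift
    (LinearMap.toSpanSingleton (SmashD K N q) _ (Finsupp.lsingle (0, baseCoset K N b)))

theorem tensorToModel_tmul (d : SmashD K N q) (s : S) :
    tensorToModel K q b S (d ⊗ₜ[K] s) =
      d • (Finsupp.single (0, baseCoset K N b) s : Model K N b S) :=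
  rfl

theorem indRelb_le_ker_tensorToModel :
    indRelb K N q b S ≤ LinearMap.ker (tensorToModel K q b S) := by
  refine Submodule.span_le.mpr ?_
  rintro _ ((⟨d, i, s, rfl⟩ | ⟨d, i, s, rfl⟩) | ⟨d, v, s, rfl⟩) <;>
    simp only [SetLike.mem_coe, LinearMap.mem_ker, map_sub, tensorToModel_tmul, mul_smul,
      sub_eq_zero, Ye_smul_single, YeInv_smul_single, Se_smul_single_base, weight_base]

def modelToQuotientₗ (K : Type) [Field K] {N : ℕ} (q : Kˣ) (b : Fin N → Kˣ) (S : Type)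
    [AddCommGroup S] [Module K S] [DistribMulAction (permStab K N b) S]
    [SMulCommClass (permStab K N b) K S] :
    Model K N b S →ₗ[K] (SmashD K N q ⊗[K] S) ⧸ indRelb K N q b S :=
  Finsupp.lsum K fun p => ((indRelb K N q b S).mkQ.restrictScalars K) ∘ₗ
    TensorProduct.mk K (SmashD K N q) S (basisUnit K q p : SmashD K N q)

theorem modelToQuotientₗ_single (p : ModelIndex K N b) (s : S) :
    modelToQuotientₗ K q b S (Finsupp.single p s) =
      (indRelb K N q b S).mkQ ((basisUnit K q p : SmashD K N q) ⊗ₜ[K] s) := by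
  simp [modelToQuotientₗ]

theorem modelToQuotientₗ_map_smul (d : SmashD K N q) (m : Model K N b S) :
    modelToQuotientₗ K q b S (d • m) = d • modelToQuotientₗ K q b S m := by
  set f := modelToQuotientₗ K q b S
  have of_single (x : SmashD K N q)
      (hx : ∀ p s, f (x • Finsupp.single p s) = x • f (Finsupp.single p s)) (m : Model K N b S) :
      f (x • m) = x • f m := by
    induction m using Finsupp.induction_linear with
    | zero => simp
    | add m m' hm hm' => rw [smul_add, map_add, map_add, hm, hm', smul_add]
    | single p s => exact hx p s
  have hY (i : Fin N) : ∀ m, f (Ye K q i • m) = Ye K q i • f m := of_single _ fun p s => by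
    rw [Ye_smul_single, modelToQuotientₗ_single, modelToQuotientₗ_single, smul_mkQ_tmul,
      Ye_mul_basisUnit, TensorProduct.smul_tmul, mkQ_mul_Ye_tmul, weight, Units.val_mul, mul_smul,
      smul_comm]
    rfl
  refine LinearMap.map_smul_of_adjoin_eq_top adjoin_generators_eq_top f ?_ d m
  rintro _ ⟨g, rfl⟩
  cases g with
  | X i =>
    refine of_single _ fun p s => ?_
    change f (Xe K q i • _) = Xe K q i • _
    rw [Xe_smul_single, modelToQuotientₗ_single, modelToQuotientₗ_single, smul_mkQ_tmul,
      basisUnit_add_single_one]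
  | Xinv i =>
    refine of_single _ fun p s => ?_
    change f (XeInv K q i • _) = XeInv K q i • _
    rw [XeInv_smul_single, modelToQuotientₗ_single, modelToQuotientₗ_single, smul_mkQ_tmul,
      basisUnit_add_single_neg_one]
  | Y i => exact hY i
  | Yinv i => exact Units.map_inv_smul_of_map_smul f (yUnit K q i) (hY i)
  | S w =>
    refine of_single _ fun p s => ?_
    change f (Se K q w • _) = Se K q w • _
    rw [Se_smul_single, modelToQuotientₗ_single, modelToQuotientₗ_single, smul_mkQ_tmul,
      Se_mul_basisUnit, mkQ_mul_Se_tmul]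

def modelToQuotient (K : Type) [Field K] {N : ℕ} (q : Kˣ) (b : Fin N → Kˣ) (S : Type)
    [AddCommGroup S] [Module K S] [DistribMulAction (permStab K N b) S]
    [SMulCommClass (permStab K N b) K S] :
    Model K N b S →ₗ[SmashD K N q] (SmashD K N q ⊗[K] S) ⧸ indRelb K N q b S :=
  { modelToQuotientₗ K q b S with map_smul' := modelToQuotientₗ_map_smul }

def quotientEquivModel (K : Type) [Field K] {N : ℕ} (q : Kˣ) (b : Fin N → Kˣ) (S : Type)
    [AddCommGroup S] [Module K S] [DistribMulAction (permStab K N b) S]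
    [SMulCommClass (permStab K N b) K S] :
    ((SmashD K N q ⊗[K] S) ⧸ indRelb K N q b S) ≃ₗ[SmashD K N q] Model K N b S :=
  LinearEquiv.ofLinearMap ((indRelb K N q b S).liftQ _ indRelb_le_ker_tensorToModel)
    (modelToQuotient K q b S)
    (by
      refine LinearMap.restrictScalars_injective K (Finsupp.lhom_ext fun p s => ?_)
      change (indRelb K N q b S).liftQ _ indRelb_le_ker_tensorToModel
        (modelToQuotientₗ K q b S _) = _
      rw [modelToQuotientₗ_single, Submodule.mkQ_apply, Submodule.liftQ_apply, tensorToModel_tmul,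
        basisUnit_smul_single]
      rfl)
    (by
      refine Submodule.linearMap_qext _ (TensorProduct.AlgebraTensorModule.ext fun d s => ?_)
      change modelToQuotient K q b S ((indRelb K N q b S).liftQ _ indRelb_le_ker_tensorToModel
        (Submodule.Quotient.mk _)) = _
      rw [Submodule.liftQ_apply, tensorToModel_tmul, map_smul]
      change d • modelToQuotientₗ K q b S _ = _
      rw [modelToQuotientₗ_single, basisUnit_base, Units.val_one, smul_mkQ_tmul, mul_one]
      rfl)

end Induced

theorem isSimpleModule_model {b : Fin N → Kˣ} {S : Type} [AddCommGroup S] [Module K S]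
    [DistribMulAction (permStab K N b) S] [SMulCommClass (permStab K N b) K S] [Nontrivial S]
    (hq : ∀ m : ℕ, m ≠ 0 → (q : K) ^ m ≠ 1)
    (hb : ∀ i j : Fin N, b i ≠ b j → ∀ z : ℤ, b i / b j ≠ q ^ z)
    (hS : ∀ p : Submodule K S,
      (∀ (w : permStab K N b) (x : S), x ∈ p → w • x ∈ p) → p = ⊥ ∨ p = ⊤) :
    IsSimpleModule (SmashD K N q) (Model K N b S) := by
  refine { eq_bot_or_eq_top := fun V => or_iff_not_imp_left.mpr fun hV => ?_ }
  obtain ⟨m, hmV, hm0⟩ := Submodule.exists_mem_ne_zero_of_ne_bot hV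
  obtain ⟨p, s, hs, hpV⟩ := Finsupp.exists_single_mem_of_diagonal (fun p i => (weight q p i : K))
    (Units.val_injective.comp_left.comp (weight_injective hq hb)) (V.restrictScalars K)
    (fun i m hm => ⟨Ye K q i • m, V.smul_mem _ hm, Ye_smul_apply i m⟩) hmV hm0
  let T : Submodule K S := (V.restrictScalars K).comap (Finsupp.lsingle (0, baseCoset K N b))
  have hsT : s ∈ T := by
    change Finsupp.single _ s ∈ V
    rw [← basisUnit_smul_single (q := q)] at hpV
    simpa [← mul_smul] using V.smul_mem ((basisUnit K q p)⁻¹ : (SmashD K N q)ˣ) hpV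
  have hT : T = ⊤ := by
    refine (hS T fun w x hx => ?_).resolve_left fun h => hs ((Submodule.eq_bot_iff _).mp h s hsT)
    simpa [T, Se_smul_single_base] using V.smul_mem (Se K q w) hx
  rw [eq_top_iff]
  rintro m -
  induction m using Finsupp.induction_linear with
  | zero => exact V.zero_mem
  | add m m' hm hm' => exact V.add_mem hm hm'
  | single p t =>
    rw [← basisUnit_smul_single (q := q)]
    exact V.smul_mem _ (show t ∈ T from hT ▸ Submodule.mem_top)

end SmashD

theorem statement14_general (K : Type) [Field K] (N : ℕ)
    (q : Kˣ) (hq : ∀ m : ℕ, m ≠ 0 → (q : K) ^ m ≠ 1)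
    (b : Fin N → Kˣ)
    (hb : ∀ i j : Fin N, b i ≠ b j → ∀ z : ℤ, b i / b j ≠ q ^ z)
    (S : Type) [AddCommGroup S] [Module K S]
    [DistribMulAction ↥(permStab K N b) S]
    [SMulCommClass ↥(permStab K N b) K S]
    (hS0 : Nontrivial S)
    (hSsimple : ∀ p : Submodule K S,
      (∀ (w : ↥(permStab K N b)) (x : S), x ∈ p → w • x ∈ p) → p = ⊥ ∨ p = ⊤) :
    IsSimpleModule (SmashD K N q) ((SmashD K N q ⊗[K] S) ⧸ indRelb K N q b S) := by
  have := SmashD.isSimpleModule_model hq hb hSsimple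
  exact IsSimpleModule.congr (SmashD.quotientEquivModel K q b S)

theorem statement14 (K : Type) [Field K] [CharZero K] (N : ℕ) (hN : 1 ≤ N)
    (q : Kˣ) (hq : ∀ m : ℕ, m ≠ 0 → (q : K) ^ m ≠ 1)
    (b : Fin N → Kˣ)
    (hb : ∀ i j : Fin N, b i ≠ b j → ∀ z : ℤ, b i / b j ≠ q ^ z)
    (S : Type) [AddCommGroup S] [Module K S]
    [DistribMulAction ↥(permStab K N b) S]
    [SMulCommClass ↥(permStab K N b) K S]
    (hS0 : Nontrivial S)
    (hSsimple : ∀ p : Submodule K S,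
      (∀ (w : ↥(permStab K N b)) (x : S), x ∈ p → w • x ∈ p) → p = ⊥ ∨ p = ⊤) :
    IsSimpleModule (SmashD K N q) ((SmashD K N q ⊗[K] S) ⧸ indRelb K N q b S) :=
  statement14_general K N q hq b hb S hS0 hSsimple

end
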